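/- arXiv:2305.07394 — 2 statements merged into one kernel-verified Lean document; each statement's English description precedes it below -/
import Mathlib

section
/- Let α be irrational with continued fraction convergents p_k/q_k, let K ≥ 0 and N be an integer with q_K ≤ N < q_{K+1}, and let t > 0. Then the number of integers 1 ≤ n ≤ N with ‖nα‖ ≤ t is at most 4·q_{K+1}·t + 1. -/
open Real Finset MeasureTheory Filter

/-- Distance from `x` to the nearest integer. -/
noncomputable def nint (x : ℝ) : ℝ := |x - round x|

/-- Continued fraction partial quotients of `α` (for `k ≥ 1`), via the Gauss map. -/
noncomputable def cfA (α : ℝ) : ℕ → ℕ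
  | 0 => 0
  | k + 1 => ⌊((fun x : ℝ => Int.fract x⁻¹)^[k] (Int.fract α))⁻¹⌋₊

/-- Continued fraction convergent denominators of `α`. -/
noncomputable def cfQ (α : ℝ) : ℕ → ℕ
  | 0 => 1
  | 1 => cfA α 1
  | k + 2 => cfA α (k + 2) * cfQ α (k + 1) + cfQ α k

/-- Partial sums `s_K = a_1 + ⋯ + a_K` of the partial quotients. -/
noncomputable def cfS (α : ℝ) (K : ℕ) : ℕ := ∑ k ∈ Finset.Icc 1 K, cfA α k

/-- `α` is badly approximable: `inf_{n ≥ 1} n‖nα‖ > 0`. -/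
def BadlyApproximable (α : ℝ) : Prop :=
  ∃ c : ℝ, 0 < c ∧ ∀ n : ℕ, 1 ≤ n → c ≤ n * nint (n * α)


section CFProof
open GenContFract

noncomputable def cfP (α : ℝ) : ℕ → ℤ
  | 0 => ⌊α⌋
  | 1 => cfA α 1 * ⌊α⌋ + 1
  | k + 2 => cfA α (k + 2) * cfP α (k + 1) + cfP α k

private lemma gauss_iter_irrational {v : ℝ} (hv : Irrational v) (n : ℕ) :
    Irrational ((fun x : ℝ => Int.fract x⁻¹)^[n] (Int.fract v)) := by
  induction n with
  | zero => simpa only [Int.fract, Function.iterate_zero, id_eq] using hv.sub_intCast ⌊v⌋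
  | succ n ih =>
    rw [Function.iterate_succ_apply']
    simpa only [Int.fract] using (ih.inv).sub_intCast _

private lemma gauss_iter_mem {v : ℝ} (hv : Irrational v) (n : ℕ) :
    0 < (fun x : ℝ => Int.fract x⁻¹)^[n] (Int.fract v) ∧
      (fun x : ℝ => Int.fract x⁻¹)^[n] (Int.fract v) < 1 := by
  have hirr := gauss_iter_irrational hv n
  obtain ⟨w, hw⟩ : ∃ w, (fun x : ℝ => Int.fract x⁻¹)^[n] (Int.fract v) = Int.fract w := by
    cases n with
    | zero => exact ⟨v, rfl⟩
    | succ n => exact ⟨_, Function.iterate_succ_apply' _ _ _⟩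
  rw [hw] at hirr ⊢
  refine ⟨lt_of_le_of_ne (Int.fract_nonneg w) ?_, Int.fract_lt_one w⟩
  intro h
  exact hirr.ne_int 0 (by simpa using h.symm)

private lemma gauss_iter_inv_gt {v : ℝ} (hv : Irrational v) (n : ℕ) :
    1 < ((fun x : ℝ => Int.fract x⁻¹)^[n] (Int.fract v))⁻¹ := by
  obtain ⟨h0, h1⟩ := gauss_iter_mem hv n
  exact (one_lt_inv₀ h0).2 h1

private lemma cfA_pos {v : ℝ} (hv : Irrational v) (k : ℕ) : 1 ≤ cfA v (k + 1) := by
  have := gauss_iter_inv_gt hv k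
  rw [cfA]
  exact Nat.le_floor (by exact_mod_cast this.le)

lemma fract_irrational {v : ℝ} (hv : Irrational v) : Irrational (Int.fract v) := by
  simpa only [Int.fract] using hv.sub_intCast ⌊v⌋

lemma fract_ne_zero {v : ℝ} (hv : Irrational v) : Int.fract v ≠ 0 := fun h =>
  (fract_irrational hv).ne_int 0 (by simpa using h)

lemma inv_fract_irrational {v : ℝ} (hv : Irrational v) : Irrational (Int.fract v)⁻¹ :=
  (fract_irrational hv).inv

private lemma stream_eq : ∀ (n : ℕ) (v : ℝ), Irrational v →
    ∃ b : ℤ, GenContFract.IntFractPair.stream v n =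
      some ⟨b, (fun x : ℝ => Int.fract x⁻¹)^[n] (Int.fract v)⟩
  | 0, v, hv => ⟨⌊v⌋, rfl⟩
  | (n+1), v, hv => by
    rw [GenContFract.IntFractPair.stream_succ (fract_ne_zero hv)]
    obtain ⟨b, hb⟩ := stream_eq n (Int.fract v)⁻¹ (inv_fract_irrational hv)
    refine ⟨b, ?_⟩
    rw [hb, Function.iterate_succ_apply]

private lemma sget_eq : ∀ (n : ℕ) (v : ℝ), Irrational v →
    (GenContFract.of v).s.get? n = some ⟨1, (cfA v (n+1) : ℝ)⟩
  | 0, v, hv => by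
    have h0 : (GenContFract.of v).s.get? 0 = (GenContFract.of v).s.head := rfl
    rw [h0, GenContFract.of_s_head (fract_ne_zero hv)]
    have hx : (0:ℝ) ≤ (Int.fract v)⁻¹ := inv_nonneg.2 (Int.fract_nonneg v)
    congr 1
    show (⟨1, (⌊(Int.fract v)⁻¹⌋ : ℝ)⟩ : Pair ℝ) = ⟨1, (cfA v 1 : ℝ)⟩
    congr 1
    rw [show cfA v 1 = ⌊(Int.fract v)⁻¹⌋₊ from rfl, ← Int.floor_toNat]
    exact_mod_cast (Int.toNat_of_nonneg (Int.floor_nonneg.2 hx)).symm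
  | (n+1), v, hv => by
    rw [GenContFract.of_s_succ]
    rw [sget_eq n (Int.fract v)⁻¹ (inv_fract_irrational hv)]
    congr 2

lemma cfQ_pos {v : ℝ} (hv : Irrational v) : ∀ n, 1 ≤ cfQ v n
  | 0 => le_refl 1
  | 1 => cfA_pos hv 0
  | (n+2) => by
    show 1 ≤ cfA v (n+2) * cfQ v (n+1) + cfQ v n
    have := cfQ_pos hv n
    omega

lemma cfQ_mono_succ {v : ℝ} (hv : Irrational v) : ∀ n, cfQ v n ≤ cfQ v (n + 1)
  | 0 => cfQ_pos hv 1
  | (n+1) => by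
    show cfQ v (n+1) ≤ cfA v (n+2) * cfQ v (n+1) + cfQ v n
    calc cfQ v (n+1) ≤ cfA v (n+2) * cfQ v (n+1) :=
          Nat.le_mul_of_pos_left _ (cfA_pos hv (n+1))
      _ ≤ _ := Nat.le_add_right _ _

lemma cfQ_mono {v : ℝ} (hv : Irrational v) : Monotone (cfQ v) :=
  monotone_nat_of_le_succ (cfQ_mono_succ hv)

lemma cfQ_cast {v : ℝ} (hv : Irrational v) : ∀ n, ((cfQ v n : ℝ)) = (GenContFract.of v).dens n
  | 0 => by simp [cfQ]
  | 1 => by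
    rw [GenContFract.first_den_eq (sget_eq 0 v hv)]
    rfl
  | (n+2) => by
    rw [GenContFract.dens_recurrence (sget_eq (n+1) v hv) (cfQ_cast hv n).symm
      (cfQ_cast hv (n+1)).symm]
    show ((cfA v (n + 2) * cfQ v (n + 1) + cfQ v n : ℕ) : ℝ) = _
    push_cast
    ring

lemma cfP_cast {v : ℝ} (hv : Irrational v) : ∀ n, ((cfP v n : ℝ)) = (GenContFract.of v).nums n
  | 0 => by simp [cfP, GenContFract.of_h_eq_floor]
  | 1 => by
    rw [GenContFract.first_num_eq (sget_eq 0 v hv), GenContFract.of_h_eq_floor]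
    show ((cfA v 1 * ⌊v⌋ + 1 : ℤ) : ℝ) = _
    push_cast
    ring
  | (n+2) => by
    rw [GenContFract.nums_recurrence (sget_eq (n+1) v hv) (cfP_cast hv n).symm
      (cfP_cast hv (n+1)).symm]
    show ((cfA v (n + 2) * cfP v (n + 1) + cfP v n : ℤ) : ℝ) = _
    push_cast
    ring

lemma cf_det (v : ℝ) : ∀ n, cfP v (n+1) * cfQ v n - cfP v n * cfQ v (n+1) = (-1 : ℤ)^n
  | 0 => by
    show (cfA v 1 * ⌊v⌋ + 1) * ((1:ℕ) : ℤ) - ⌊v⌋ * (cfA v 1 : ℕ) = 1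
    push_cast
    ring
  | (n+1) => by
    have ih := cf_det v n
    show (cfA v (n+2) * cfP v (n+1) + cfP v n) * (cfQ v (n+1) : ℤ)
        - cfP v (n+1) * ((cfA v (n+2) * cfQ v (n+1) + cfQ v n : ℕ) : ℤ) = (-1)^(n+1)
    push_cast
    push_cast at ih
    ring_nf
    ring_nf at ih
    linarith [ih]

lemma cf_coprime (v : ℝ) (n : ℕ) : IsCoprime (cfP v n) ((cfQ v n : ℤ)) := by
  rcases Nat.even_or_odd n with he | ho
  · exact ⟨-(cfQ v (n+1)), cfP v (n+1), by
      have := cf_det v n; rw [he.neg_one_pow] at this; linarith [this]⟩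
  · exact ⟨(cfQ v (n+1) : ℤ), -(cfP v (n+1)), by
      have := cf_det v n; rw [ho.neg_one_pow] at this; linarith [this]⟩

lemma conv_eq_ratio {v : ℝ} (hv : Irrational v) (n : ℕ) :
    (GenContFract.of v).convs n = (cfP v n : ℝ) / (cfQ v n : ℝ) := by
  rw [GenContFract.conv_eq_num_div_den, cfQ_cast hv, cfP_cast hv]

lemma convergent_eq {v : ℝ} (hv : Irrational v) (n : ℕ) :
    Real.convergent v n = ((cfP v n : ℚ) / (cfQ v n : ℚ)) := by
  have h1 : ((Real.convergent v n : ℚ) : ℝ) = (((cfP v n : ℚ) / (cfQ v n : ℚ) : ℚ) : ℝ) := by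
    rw [← Real.convs_eq_convergent, conv_eq_ratio hv]
    push_cast
    ring
  exact_mod_cast h1

lemma convergent_den {v : ℝ} (hv : Irrational v) (n : ℕ) :
    ((Real.convergent v n).den : ℤ) = (cfQ v n : ℤ) := by
  rw [convergent_eq hv n]
  have h := cf_coprime v n
  have hq : (0:ℤ) < (cfQ v n : ℤ) := by exact_mod_cast cfQ_pos hv n
  have : ((cfP v n : ℚ) / ((cfQ v n : ℤ) : ℚ)).den = ((cfQ v n : ℤ)) :=
    Rat.den_div_eq_of_coprime hq (Int.isCoprime_iff_gcd_eq_one.mp h)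
  exact_mod_cast this

lemma err_lb {v : ℝ} (hv : Irrational v) (n : ℕ) :
    1 / (2 * (cfQ v n : ℝ) * (cfQ v (n+1) : ℝ)) < |v - (GenContFract.of v).convs n| := by
  obtain ⟨b, hstream⟩ := stream_eq n v hv
  have hsub := GenContFract.sub_convs_eq hstream
  set fr := (fun x : ℝ => Int.fract x⁻¹)^[n] (Int.fract v) with hfr
  obtain ⟨hfr0, hfr1⟩ := gauss_iter_mem hv n
  set g := GenContFract.of v
  set B := (g.contsAux (n+1)).b with hB
  set pB := (g.contsAux n).b with hpB
  have hBd : B = g.dens n := by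
    rw [GenContFract.den_eq_conts_b, GenContFract.nth_cont_eq_succ_nth_contAux]
  have hfrne : fr ≠ 0 := ne_of_gt hfr0
  simp only [hfrne, if_false] at hsub
  -- recurrence for dens (n+1)
  have hrec : g.dens (n+1) = (cfA v (n+1) : ℝ) * B + pB := by
    rw [GenContFract.den_eq_conts_b, GenContFract.nth_cont_eq_succ_nth_contAux]
    rw [GenContFract.contsAux_recurrence (sget_eq n v hv) rfl rfl]
    simp [GenContFract.nextConts, GenContFract.nextDen, ← hB, ← hpB]
    rfl
  have hpB0 : 0 ≤ pB := GenContFract.zero_le_of_contsAux_b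
  have hB1 : (1:ℝ) ≤ B := by
    rw [hBd, ← cfQ_cast hv n]; exact_mod_cast cfQ_pos hv n
  have hfi0 : 0 < fr⁻¹ := inv_pos.2 hfr0
  have hdd : g.dens n ≤ g.dens (n+1) := GenContFract.of_den_mono
  have hflt : fr⁻¹ < (cfA v (n+1) : ℝ) + 1 := by
    have h := Nat.lt_floor_add_one fr⁻¹
    have : cfA v (n+1) = ⌊fr⁻¹⌋₊ := rfl
    rw [this]
    exact_mod_cast h
  have hden_lt : fr⁻¹ * B + pB < 2 * g.dens (n+1) := by
    have h1 : fr⁻¹ * B < ((cfA v (n+1) : ℝ) + 1) * B :=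
      mul_lt_mul_of_pos_right hflt (lt_of_lt_of_le one_pos hB1)
    have h2 : B ≤ g.dens (n+1) := hBd.le.trans hdd
    nlinarith [hrec]
  have hinner : 0 < fr⁻¹ * B + pB := by nlinarith
  have hD : 0 < B * (fr⁻¹ * B + pB) := by nlinarith
  have habs : |v - g.convs n| = 1 / (B * (fr⁻¹ * B + pB)) := by
    rw [hsub, abs_div, abs_pow, abs_neg, abs_one, one_pow, abs_of_pos hD]
  rw [habs]
  rw [cfQ_cast hv n, cfQ_cast hv (n+1)]
  apply one_div_lt_one_div_of_lt hD
  calc B * (fr⁻¹ * B + pB) < B * (2 * g.dens (n+1)) := by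
        exact mul_lt_mul_of_pos_left hden_lt (lt_of_lt_of_le one_pos hB1)
    _ = 2 * g.dens n * g.dens (n+1) := by rw [hBd]; ring

lemma nint_le (x : ℝ) (z : ℤ) : nint x ≤ |x - z| := by
  rcases eq_or_ne z (round x) with rfl | hz
  · exact le_refl _
  · have h1 : (1 : ℝ) ≤ |(z : ℝ) - round x| := by
      have : z - round x ≠ 0 := sub_ne_zero.2 (by exact_mod_cast hz)
      calc (1:ℝ) ≤ |(z - round x : ℤ)| := by exact_mod_cast Int.one_le_abs (by exact_mod_cast this)
        _ = |(z : ℝ) - round x| := by push_cast; ring_nf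
    have h2 : |x - round x| ≤ 1/2 := abs_sub_round x
    have h3 : |(z:ℝ) - round x| ≤ |x - z| + |x - round x| := by
      have := abs_sub (x - (z:ℝ)) (x - round x)
      calc |(z:ℝ) - round x| = |(x - round x) - (x - z)| := by ring_nf
        _ ≤ |x - round x| + |x - z| := abs_sub _ _
        _ = |x - z| + |x - round x| := by ring
    show |x - round x| ≤ |x - z|
    linarith

lemma key_lb {α : ℝ} (hirr : Irrational α) (K : ℕ) (m : ℕ) (hm1 : 1 ≤ m)
    (hm2 : m < cfQ α (K + 1)) : 1 / (2 * (cfQ α (K+1) : ℝ)) ≤ nint (m * α) := by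
  by_contra hcon
  push_neg at hcon
  set Q' : ℕ := cfQ α (K+1) with hQ'
  have hQ'1 : 1 ≤ Q' := cfQ_pos hirr (K+1)
  have hQ'R : (1:ℝ) ≤ (Q' : ℝ) := by exact_mod_cast hQ'1
  have hmR : (1:ℝ) ≤ (m : ℝ) := by exact_mod_cast hm1
  have hm0 : (0:ℝ) < m := lt_of_lt_of_le one_pos hmR
  set p : ℤ := round ((m:ℝ) * α) with hp
  set q : ℚ := (p : ℚ) / (m : ℚ) with hq
  have hqden_dvd : (q.den : ℤ) ∣ (m : ℤ) := by
    have hqd : q = Rat.divInt p (m : ℤ) := by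
      rw [Rat.divInt_eq_div, hq]; push_cast; ring
    rw [hqd]
    exact Rat.den_dvd p m
  have hqden_le : q.den ≤ m := by
    have := Int.le_of_dvd (by exact_mod_cast hm0) hqden_dvd
    exact_mod_cast this
  have hqden_pos : 0 < q.den := q.pos
  have hqcast : (q : ℝ) = (p : ℝ) / (m : ℝ) := by
    rw [hq]; push_cast; ring
  have herr : |α - (q:ℝ)| = nint ((m:ℝ) * α) / m := by
    rw [hqcast, nint]
    rw [eq_div_iff (ne_of_gt hm0), ← abs_of_pos hm0, ← abs_mul]
    congr 1
    rw [hp, abs_of_pos hm0]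
    field_simp
  -- Legendre hypothesis
  have hleg : |α - q| < 1 / (2 * (q.den : ℝ)^2) := by
    rw [herr]
    have hden2 : ((q.den : ℝ))^2 ≤ (m : ℝ) * Q' := by
      have h1 : (q.den : ℝ) ≤ m := by exact_mod_cast hqden_le
      have h2 : (q.den : ℝ) ≤ Q' := by
        have : q.den < Q' := lt_of_le_of_lt hqden_le hm2
        exact_mod_cast this.le
      have h0 : (0:ℝ) ≤ (q.den : ℝ) := by positivity
      nlinarith
    have : nint ((m:ℝ)*α) / m < 1 / (2 * (m:ℝ) * Q') := by
      rw [div_lt_div_iff₀ hm0 (by positivity)]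
      calc nint ((m:ℝ)*α) * (2 * (m:ℝ) * Q') < (1 / (2 * (Q':ℝ))) * (2 * (m:ℝ) * Q') := by
            apply mul_lt_mul_of_pos_right hcon (by positivity)
        _ = 1 * m := by field_simp
      -- 1 * m = 1 * m
    refine this.trans_le ?_
    rw [div_le_div_iff₀ (by positivity) (by positivity)]
    nlinarith
  obtain ⟨n, hn⟩ := Real.exists_rat_eq_convergent hleg
  have hden_n : (q.den : ℤ) = (cfQ α n : ℤ) := by rw [hn]; exact convergent_den hirr n
  have hden_nN : q.den = cfQ α n := by exact_mod_cast hden_n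
  have hQn_le_m : cfQ α n ≤ m := hden_nN ▸ hqden_le
  have hnK : n ≤ K := by
    by_contra hh
    push_neg at hh
    have h3 := cfQ_mono hirr (show K+1 ≤ n from hh)
    have hm2' : m < cfQ α (K+1) := hm2
    omega
  have hQsn : cfQ α (n+1) ≤ Q' := cfQ_mono hirr (by omega)
  have hqconv : (q : ℝ) = (GenContFract.of α).convs n := by
    rw [hn, ← Real.convs_eq_convergent]
  have hlb := err_lb hirr n
  rw [← hqconv] at hlb
  -- nint(mα) = m * |α - q|
  have hnint : nint ((m:ℝ) * α) = m * |α - (q:ℝ)| := by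
    rw [herr]; field_simp
  have hQn1 : (1:ℝ) ≤ (cfQ α n : ℝ) := by exact_mod_cast cfQ_pos hirr n
  have hQsn1 : (1:ℝ) ≤ (cfQ α (n+1) : ℝ) := by exact_mod_cast cfQ_pos hirr (n+1)
  have hA0 : 0 < |α - (q:ℝ)| := lt_trans (by positivity) hlb
  rw [div_lt_iff₀ (by positivity)] at hlb
  have hmge : (cfQ α n : ℝ) ≤ m := by exact_mod_cast hQn_le_m
  have hQ'ge : (cfQ α (n+1) : ℝ) ≤ (Q' : ℝ) := by exact_mod_cast hQsn
  have hfin : 1 / (2 * (Q' : ℝ)) ≤ nint ((m:ℝ) * α) := by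
    rw [hnint, div_le_iff₀ (by positivity)]
    have hprod : (cfQ α n : ℝ) * (cfQ α (n+1) : ℝ) ≤ (m:ℝ) * (Q':ℝ) :=
      mul_le_mul hmge hQ'ge (by positivity) (by positivity)
    nlinarith
  linarith

end CFProof

theorem stmt2 (α : ℝ) (hirr : Irrational α) (K N : ℕ)
    (h1 : cfQ α K ≤ N) (h2 : N < cfQ α (K + 1)) (t : ℝ) (ht : 0 < t) :
    ({n : ℕ | 1 ≤ n ∧ n ≤ N ∧ nint (n * α) ≤ t}.ncard : ℝ)
      ≤ 4 * cfQ α (K + 1) * t + 1 := by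
  set Q' : ℕ := cfQ α (K + 1) with hQ'
  have hQ'1 : 1 ≤ Q' := cfQ_pos hirr (K+1)
  have hQ'R : (1:ℝ) ≤ (Q' : ℝ) := by exact_mod_cast hQ'1
  set δ : ℝ := 1 / (2 * (Q' : ℝ)) with hδ
  have hδ0 : 0 < δ := by positivity
  set S : Set ℕ := {n : ℕ | 1 ≤ n ∧ n ≤ N ∧ nint (n * α) ≤ t} with hS
  set x : ℕ → ℝ := fun n => (n:ℝ) * α - round ((n:ℝ) * α) with hx
  set f : ℕ → ℤ := fun n => ⌊(x n + t) / δ⌋ with hf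
  -- separation of the x n
  have hsep : ∀ a ∈ S, ∀ b ∈ S, a < b → δ ≤ |x b - x a| := by
    intro a ha b hb hab
    set m : ℕ := b - a with hm
    have hm1 : 1 ≤ m := by omega
    have hm2 : m < Q' := by
      have : b ≤ N := hb.2.1
      omega
    have hcast : ((m:ℝ)) = (b:ℝ) - (a:ℝ) := by
      rw [hm]; push_cast [Nat.cast_sub hab.le]; ring
    have hkey := key_lb hirr K m hm1 hm2
    have hz : x b - x a = (m:ℝ) * α - ((round ((b:ℝ)*α) - round ((a:ℝ)*α) : ℤ) : ℝ) := by
      rw [hx, hcast]; push_cast; ring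
    calc δ ≤ nint ((m:ℝ) * α) := hkey
      _ ≤ |(m:ℝ) * α - ((round ((b:ℝ)*α) - round ((a:ℝ)*α) : ℤ) : ℝ)| := nint_le _ _
      _ = |x b - x a| := by rw [hz]
  -- injectivity
  have hinj : Set.InjOn f S := by
    intro a ha b hb hfeq
    by_contra hne
    rcases Nat.lt_or_ge a b with h | h
    · have hs := hsep a ha b hb h
      have h1 : (x b + t) / δ < ⌊(x a + t)/δ⌋ + 1 := by
        rw [show (⌊(x a + t)/δ⌋ : ℝ) = (f a : ℝ) from rfl, hfeq]
        exact Int.lt_floor_add_one _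
      have h2 : (⌊(x a + t)/δ⌋ : ℝ) ≤ (x a + t)/δ := Int.floor_le _
      have h3 : (x b + t)/δ - (x a + t)/δ < 1 := by linarith
      have h4 : (x a + t)/δ < ⌊(x b + t)/δ⌋ + 1 := by
        rw [show (⌊(x b + t)/δ⌋ : ℝ) = (f b : ℝ) from rfl, ← hfeq]
        exact Int.lt_floor_add_one _
      have h5 : (⌊(x b + t)/δ⌋ : ℝ) ≤ (x b + t)/δ := Int.floor_le _
      have h6 : (x a + t)/δ - (x b + t)/δ < 1 := by linarith
      have h7 : |x b - x a| < δ := by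
        rw [abs_lt]
        constructor
        · have := h6
          rw [div_sub_div_same, div_lt_one hδ0] at this
          linarith
        · have := h3
          rw [div_sub_div_same, div_lt_one hδ0] at this
          linarith
      linarith
    · have hlt : b < a := by omega
      have hs := hsep b hb a ha hlt
      have h1 : (x a + t) / δ < ⌊(x b + t)/δ⌋ + 1 := by
        rw [show (⌊(x b + t)/δ⌋ : ℝ) = (f b : ℝ) from rfl, ← hfeq]
        exact Int.lt_floor_add_one _
      have h2 : (⌊(x b + t)/δ⌋ : ℝ) ≤ (x b + t)/δ := Int.floor_le _
      have h4 : (x b + t)/δ < ⌊(x a + t)/δ⌋ + 1 := by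
        rw [show (⌊(x a + t)/δ⌋ : ℝ) = (f a : ℝ) from rfl, hfeq]
        exact Int.lt_floor_add_one _
      have h5 : (⌊(x a + t)/δ⌋ : ℝ) ≤ (x a + t)/δ := Int.floor_le _
      have h7 : |x a - x b| < δ := by
        rw [abs_lt]
        constructor
        · have h6 : (x b + t)/δ - (x a + t)/δ < 1 := by linarith
          rw [div_sub_div_same, div_lt_one hδ0] at h6
          linarith
        · have h3 : (x a + t)/δ - (x b + t)/δ < 1 := by linarith
          rw [div_sub_div_same, div_lt_one hδ0] at h3
          linarith
      linarith
  -- image is contained in Icc 0 M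
  set M : ℤ := ⌊2 * t / δ⌋ with hM
  have himg : ∀ n ∈ S, f n ∈ Finset.Icc (0:ℤ) M := by
    intro n hn
    have habs : |x n| ≤ t := hn.2.2
    rw [abs_le] at habs
    rw [Finset.mem_Icc]
    constructor
    · apply Int.floor_nonneg.2
      apply div_nonneg _ hδ0.le
      linarith [habs.1]
    · apply Int.floor_le_floor
      exact (div_le_div_iff_of_pos_right hδ0).2 (by linarith [habs.2])
  -- cardinality bound
  have hSfin : S.Finite := Set.Finite.subset (Set.finite_Icc 1 N)
    (fun n hn => Set.mem_Icc.2 ⟨hn.1, hn.2.1⟩)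
  have hcard : S.ncard ≤ (Finset.Icc (0:ℤ) M).card := by
    rw [← Set.ncard_image_of_injOn hinj]
    have hsub : f '' S ⊆ ↑(Finset.Icc (0:ℤ) M) := by
      rintro y ⟨n, hn, rfl⟩
      exact himg n hn
    calc (f '' S).ncard ≤ (↑(Finset.Icc (0:ℤ) M) : Set ℤ).ncard :=
          Set.ncard_le_ncard hsub (Finset.finite_toSet _)
      _ = (Finset.Icc (0:ℤ) M).card := Set.ncard_coe_finset _
  have hM0 : 0 ≤ M := Int.floor_nonneg.2 (by positivity)
  have hcardIcc : (Finset.Icc (0:ℤ) M).card = (M + 1).toNat := by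
    rw [Int.card_Icc]
    congr 1
    omega
  have hfinal : (S.ncard : ℝ) ≤ (M : ℝ) + 1 := by
    have h0 : (S.ncard : ℝ) ≤ ((M+1).toNat : ℝ) := by
      exact_mod_cast hcard.trans_eq hcardIcc
    have h1 : (((M+1).toNat : ℤ) : ℝ) = (M : ℝ) + 1 := by
      rw [Int.toNat_of_nonneg (by omega)]; push_cast; ring
    calc (S.ncard : ℝ) ≤ (((M+1).toNat : ℤ) : ℝ) := by exact_mod_cast h0
      _ = (M : ℝ) + 1 := h1
  have hMle : (M : ℝ) ≤ 2 * t / δ := Int.floor_le _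
  have hδval : 2 * t / δ = 4 * (Q' : ℝ) * t := by
    rw [hδ]; field_simp; ring
  calc (S.ncard : ℝ) ≤ (M : ℝ) + 1 := hfinal
    _ ≤ 2 * t / δ + 1 := by linarith
    _ = 4 * (Q' : ℝ) * t + 1 := by rw [hδval]
end

section
/- Let α be irrational with continued fraction convergents p_k/q_k and partial quotients a_k. There is a universal constant C such that for every k ≥ 0, the number of integers n with q_k ≤ n < q_{k+1} and ‖nα‖ < 1/(2n) is at most C·a_{k+1}^{1/2}. -/
open Real Finset MeasureTheory Filter

set_option maxHeartbeats 1000000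

noncomputable def xg (α : ℝ) (m : ℕ) : ℝ := (fun x : ℝ => Int.fract x⁻¹)^[m] (Int.fract α)

lemma xg_zero (α : ℝ) : xg α 0 = Int.fract α := rfl

lemma xg_succ (α : ℝ) (m : ℕ) : xg α (m+1) = Int.fract (xg α m)⁻¹ := by
  simp only [xg, Function.iterate_succ_apply']

lemma cfA_succ (α : ℝ) (m : ℕ) : cfA α (m+1) = ⌊(xg α m)⁻¹⌋₊ := rfl

lemma xg_good (α : ℝ) (hα : Irrational α) (m : ℕ) :
    Irrational (xg α m) ∧ 0 < xg α m ∧ xg α m < 1 := by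
  induction m with
  | zero =>
    have h1 : Irrational (Int.fract α) := by
      rw [Int.fract]; exact hα.sub_intCast _
    refine ⟨h1, ?_, Int.fract_lt_one _⟩
    have hne : Int.fract α ≠ 0 := fun hz => h1.ne_int 0 (by simpa using hz)
    exact lt_of_le_of_ne (Int.fract_nonneg α) (Ne.symm hne)
  | succ m ih =>
    obtain ⟨hirr, hpos, _⟩ := ih
    have hinv : Irrational (xg α m)⁻¹ := hirr.inv
    have h1 : Irrational (xg α (m+1)) := by
      rw [xg_succ, Int.fract]; exact hinv.sub_intCast _
    refine ⟨h1, ?_, by rw [xg_succ]; exact Int.fract_lt_one _⟩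
    have hne : xg α (m+1) ≠ 0 := fun hz => h1.ne_int 0 (by simpa using hz)
    exact lt_of_le_of_ne (by rw [xg_succ]; exact Int.fract_nonneg _) (Ne.symm hne)

lemma cfA_pos_s7 (α : ℝ) (hα : Irrational α) (m : ℕ) : 1 ≤ cfA α (m+1) := by
  obtain ⟨_, h0, h1⟩ := xg_good α hα m
  rw [cfA_succ]
  exact Nat.le_floor (by rw [Nat.cast_one]; exact le_of_lt ((one_lt_inv₀ h0).2 h1))

lemma inv_xg (α : ℝ) (hα : Irrational α) (m : ℕ) :
    (xg α m)⁻¹ = (cfA α (m+1) : ℝ) + xg α (m+1) := by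
  obtain ⟨_, h0, h1⟩ := xg_good α hα m
  have hinv : (0:ℝ) ≤ (xg α m)⁻¹ := le_of_lt (inv_pos.2 h0)
  rw [xg_succ, Int.fract, cfA_succ, natCast_floor_eq_intCast_floor hinv]
  ring

noncomputable def bb (α : ℝ) (k : ℕ) : ℝ := ∏ m ∈ Finset.range (k+1), xg α m

lemma bb_zero (α : ℝ) : bb α 0 = xg α 0 := by simp [bb]

lemma bb_succ (α : ℝ) (k : ℕ) : bb α (k+1) = bb α k * xg α (k+1) := by
  rw [bb, Finset.prod_range_succ]; rfl

lemma bb_pos (α : ℝ) (hα : Irrational α) (k : ℕ) : 0 < bb α k :=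
  Finset.prod_pos (fun m _ => (xg_good α hα m).2.1)

lemma bb_succ_lt (α : ℝ) (hα : Irrational α) (k : ℕ) : bb α (k+1) < bb α k := by
  rw [bb_succ]
  nlinarith [bb_pos α hα k, (xg_good α hα (k+1)).2.1, (xg_good α hα (k+1)).2.2]

lemma bb_rec (α : ℝ) (hα : Irrational α) (k : ℕ) :
    bb α (k+2) = bb α k - (cfA α (k+2) : ℝ) * bb α (k+1) := by
  have h := inv_xg α hα (k+1)
  have hx : xg α (k+1) ≠ 0 := ne_of_gt (xg_good α hα (k+1)).2.1
  rw [bb_succ, bb_succ α k]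
  have h1 : xg α (k+1) * (xg α (k+1))⁻¹ = 1 := mul_inv_cancel₀ hx
  linear_combination (-(bb α k * xg α (k+1))) * h + (bb α k) * h1

noncomputable def PP (α : ℝ) : ℕ → ℤ
  | 0 => ⌊α⌋
  | 1 => cfA α 1 * ⌊α⌋ + 1
  | k + 2 => cfA α (k + 2) * PP α (k + 1) + PP α k

lemma key4 (α : ℝ) (hα : Irrational α) (k : ℕ) :
    (cfQ α k : ℝ) * α = (PP α k : ℝ) + (-1)^k * bb α k := by
  induction k using Nat.twoStepInduction with
  | zero =>
    show ((1:ℕ):ℝ) * α = ((⌊α⌋:ℤ):ℝ) + (-1)^0 * bb α 0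
    rw [bb_zero, xg_zero, Int.fract]; push_cast; ring
  | one =>
    have h := inv_xg α hα 0
    have hx : xg α 0 ≠ 0 := ne_of_gt (xg_good α hα 0).2.1
    have h1 : xg α 0 * (xg α 0)⁻¹ = 1 := mul_inv_cancel₀ hx
    have hα0 : α = (⌊α⌋ : ℝ) + xg α 0 := by rw [xg_zero, Int.fract]; ring
    show ((cfA α 1 : ℕ) : ℝ) * α = ((cfA α 1 * ⌊α⌋ + 1 : ℤ) : ℝ) + (-1)^1 * bb α 1
    rw [bb_succ, bb_zero]
    push_cast
    linear_combination (cfA α 1 : ℝ) * hα0 - (xg α 0) * h + h1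
  | more k ih0 ih1 =>
    have hq : ((cfQ α (k+2) : ℕ) : ℝ) = (cfA α (k+2) : ℝ) * (cfQ α (k+1) : ℝ) + (cfQ α k : ℝ) := by
      show ((cfA α (k + 2) * cfQ α (k + 1) + cfQ α k : ℕ) : ℝ) = _
      push_cast; ring
    have hp : ((PP α (k+2) : ℤ) : ℝ) = (cfA α (k+2) : ℝ) * (PP α (k+1) : ℝ) + (PP α k : ℝ) := by
      show ((cfA α (k + 2) * PP α (k + 1) + PP α k : ℤ) : ℝ) = _
      push_cast; ring
    have hb := bb_rec α hα k
    rw [hq, hp, hb]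
    linear_combination ((cfA α (k+2) : ℕ) : ℝ) * ih1 + ih0

lemma cfQ_succ_eq (α : ℝ) (k : ℕ) :
    cfQ α (k+2) = cfA α (k+2) * cfQ α (k+1) + cfQ α k := rfl

lemma PP_succ_eq (α : ℝ) (k : ℕ) :
    PP α (k+2) = cfA α (k+2) * PP α (k+1) + PP α k := rfl

lemma key5 (α : ℝ) (hα : Irrational α) (k : ℕ) :
    (cfQ α (k+1) : ℝ) * bb α k + (cfQ α k : ℝ) * bb α (k+1) = 1 := by
  induction k with
  | zero =>
    have h := inv_xg α hα 0
    have hx : xg α 0 ≠ 0 := ne_of_gt (xg_good α hα 0).2.1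
    have h1 : xg α 0 * (xg α 0)⁻¹ = 1 := mul_inv_cancel₀ hx
    show ((cfA α 1 : ℕ) : ℝ) * bb α 0 + ((1:ℕ) : ℝ) * bb α 1 = 1
    rw [bb_succ, bb_zero]
    push_cast
    linear_combination - (xg α 0) * h + h1
  | succ k ih =>
    have hq : ((cfQ α (k+2) : ℕ) : ℝ) = (cfA α (k+2) : ℝ) * (cfQ α (k+1) : ℝ) + (cfQ α k : ℝ) := by
      rw [cfQ_succ_eq]; push_cast; ring
    have hb := bb_rec α hα k
    rw [hq, hb]
    linear_combination ih

lemma key6 (α : ℝ) (hα : Irrational α) (k : ℕ) :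
    (cfQ α (k+1) : ℤ) * PP α k - (cfQ α k : ℤ) * PP α (k+1) = (-1)^(k+1) := by
  induction k with
  | zero =>
    show ((cfA α 1 : ℕ) : ℤ) * ⌊α⌋ - ((1:ℕ) : ℤ) * (cfA α 1 * ⌊α⌋ + 1) = (-1)^1
    push_cast; ring
  | succ k ih =>
    have hq : ((cfQ α (k+2) : ℕ) : ℤ) = (cfA α (k+2) : ℤ) * (cfQ α (k+1) : ℤ) + (cfQ α k : ℤ) := by
      rw [cfQ_succ_eq]; push_cast; ring
    rw [hq, PP_succ_eq]
    push_cast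
    linear_combination (-1 : ℤ) * ih

lemma cfQ_pos_s7 (α : ℝ) (hα : Irrational α) (k : ℕ) : 1 ≤ cfQ α k := by
  induction k using Nat.twoStepInduction with
  | zero => exact le_refl 1
  | one => exact cfA_pos_s7 α hα 0
  | more k ih0 ih1 =>
    rw [cfQ_succ_eq]
    exact le_trans ih0 (Nat.le_add_left _ _)

lemma cfQ_mono_s7 (α : ℝ) (hα : Irrational α) (k : ℕ) : cfQ α k ≤ cfQ α (k+1) := by
  cases k with
  | zero => exact cfA_pos_s7 α hα 0
  | succ k =>
    rw [cfQ_succ_eq]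
    calc cfQ α (k+1) = 1 * cfQ α (k+1) := (one_mul _).symm
    _ ≤ cfA α (k+2) * cfQ α (k+1) := Nat.mul_le_mul_right _ (cfA_pos_s7 α hα (k+1))
    _ ≤ _ := Nat.le_add_right _ _

lemma cfQ_upper (α : ℝ) (hα : Irrational α) (k : ℕ) :
    cfQ α (k+1) ≤ (cfA α (k+1) + 1) * cfQ α k := by
  cases k with
  | zero =>
    show cfA α 1 ≤ (cfA α 1 + 1) * 1
    omega
  | succ k =>
    rw [cfQ_succ_eq, add_mul, one_mul]
    exact Nat.add_le_add_left (cfQ_mono_s7 α hα k) _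

lemma classify (α : ℝ) (hα : Irrational α) (k n : ℕ)
    (hn1 : cfQ α k ≤ n) (hn2 : n < cfQ α (k+1))
    (hcond : nint ((n:ℝ) * α) < 1 / (2 * (n:ℝ))) :
    ∃ u : ℕ, 1 ≤ u ∧ n = u * cfQ α k ∧
      ((u:ℝ))^2 < ((cfA α (k+1) : ℝ) + 2) / 2 := by
  have hQ1 : 1 ≤ cfQ α k := cfQ_pos_s7 α hα k
  have hn0 : 0 < n := lt_of_lt_of_le hQ1 hn1
  have hbp : 0 < bb α k := bb_pos α hα k
  have hbp' : 0 < bb α (k+1) := bb_pos α hα (k+1)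
  have hbb' : bb α (k+1) < bb α k := bb_succ_lt α hα k
  have hQ'1 : 1 ≤ cfQ α (k+1) := cfQ_pos_s7 α hα (k+1)
  obtain ⟨p, hp⟩ : ∃ p : ℤ, p = round ((n:ℝ) * α) := ⟨_, rfl⟩
  have hδlt : |(n:ℝ)*α - (p:ℝ)| < 1 / (2 * (n:ℝ)) := by rw [hp]; exact hcond
  have hδlt2 : 2 * (n:ℝ) * |(n:ℝ)*α - (p:ℝ)| < 1 := by
    have h2n : (0:ℝ) < 2 * (n:ℝ) := by positivity
    calc 2 * (n:ℝ) * |(n:ℝ)*α - (p:ℝ)| < 2 * (n:ℝ) * (1 / (2 * (n:ℝ))) := by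
          exact mul_lt_mul_of_pos_left hδlt h2n
    _ = 1 := by field_simp
  obtain ⟨u, hu⟩ : ∃ u : ℤ, u = (-1)^k * ((n:ℤ) * PP α (k+1) - p * (cfQ α (k+1) : ℤ)) := ⟨_, rfl⟩
  obtain ⟨v, hv⟩ : ∃ v : ℤ, v = (-1)^k * (p * (cfQ α k : ℤ) - (n:ℤ) * PP α k) := ⟨_, rfl⟩
  have hdet := key6 α hα k
  have hnuv : (n:ℤ) = u * (cfQ α k : ℤ) + v * (cfQ α (k+1) : ℤ) := by
    rw [hu, hv]
    have hsq : ((-1:ℤ))^k * (-1)^k = 1 := by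
      rw [← pow_add]; exact Even.neg_one_pow ⟨k, rfl⟩
    linear_combination ((-1:ℤ)^k * (n:ℤ)) * hdet - (n:ℤ) * hsq
  have hpuv : p = u * PP α k + v * PP α (k+1) := by
    rw [hu, hv]
    have hsq : ((-1:ℤ))^k * (-1)^k = 1 := by
      rw [← pow_add]; exact Even.neg_one_pow ⟨k, rfl⟩
    linear_combination ((-1:ℤ)^k * p) * hdet - p * hsq
  have hnR : (n:ℝ) = (u:ℝ) * (cfQ α k : ℝ) + (v:ℝ) * (cfQ α (k+1) : ℝ) := by
    exact_mod_cast congrArg (Int.cast : ℤ → ℝ) hnuv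
  have hpR : (p:ℝ) = (u:ℝ) * (PP α k : ℝ) + (v:ℝ) * (PP α (k+1) : ℝ) := by
    exact_mod_cast congrArg (Int.cast : ℤ → ℝ) hpuv
  have h4k := key4 α hα k
  have h4k1 := key4 α hα (k+1)
  have hδ : (n:ℝ)*α - (p:ℝ) = (-1)^k * ((u:ℝ) * bb α k - (v:ℝ) * bb α (k+1)) := by
    rw [hnR, hpR]
    linear_combination (u:ℝ) * h4k + (v:ℝ) * h4k1
  have habs : |(n:ℝ)*α - (p:ℝ)| = |(u:ℝ) * bb α k - (v:ℝ) * bb α (k+1)| := by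
    rw [hδ, abs_mul, abs_pow, abs_neg, abs_one, one_pow, one_mul]
  rcases lt_trichotomy v 0 with hvneg | hvzero | hvpos
  · -- v ≤ -1 : contradiction
    exfalso
    have hvle : v ≤ -1 := by omega
    have huQ : (cfQ α (k+1) : ℤ) + 1 ≤ u * (cfQ α k : ℤ) := by
      have : (1:ℤ) ≤ (n:ℤ) := by exact_mod_cast hn0
      nlinarith [hnuv, (by exact_mod_cast hQ'1 : (1:ℤ) ≤ (cfQ α (k+1) : ℤ))]
    have hupos : (1:ℤ) ≤ u := by nlinarith [(by exact_mod_cast hQ1 : (1:ℤ) ≤ (cfQ α k : ℤ))]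
    have h1 : (cfQ α (k+1) : ℤ) ≤ 2 * (n:ℤ) * u := by
      have hQn : (cfQ α k : ℤ) ≤ (n:ℤ) := by exact_mod_cast hn1
      nlinarith
    have h2 : (cfQ α k : ℤ) ≤ 2 * (n:ℤ) * (-v) := by
      have hQn : (cfQ α k : ℤ) ≤ (n:ℤ) := by exact_mod_cast hn1
      nlinarith
    have habs2 : |(u:ℝ) * bb α k - (v:ℝ) * bb α (k+1)| = (u:ℝ) * bb α k + (-v:ℤ) * bb α (k+1) := by
      rw [abs_of_nonneg]
      · push_cast; ring
      · have hu' : (1:ℝ) ≤ (u:ℝ) := by exact_mod_cast hupos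
        have hv' : (1:ℝ) ≤ ((-v : ℤ):ℝ) := by exact_mod_cast (by omega : (1:ℤ) ≤ -v)
        push_cast at hv' ⊢
        nlinarith
    rw [habs, habs2] at hδlt2
    have h1R : ((cfQ α (k+1) : ℕ):ℝ) ≤ 2 * (n:ℝ) * (u:ℝ) := by exact_mod_cast h1
    have h2R : ((cfQ α k : ℕ):ℝ) ≤ 2 * (n:ℝ) * ((-v:ℤ):ℝ) := by exact_mod_cast h2
    have hkey := key5 α hα k
    push_cast at h1R h2R hδlt2
    have e1 : ((cfQ α (k+1) : ℕ):ℝ) * bb α k ≤ (2 * (n:ℝ) * (u:ℝ)) * bb α k :=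
      mul_le_mul_of_nonneg_right h1R hbp.le
    have e2 : ((cfQ α k : ℕ):ℝ) * bb α (k+1) ≤ (2 * (n:ℝ) * (-(v:ℝ))) * bb α (k+1) :=
      mul_le_mul_of_nonneg_right h2R hbp'.le
    nlinarith [hδlt2, e1, e2, hkey]
  · -- v = 0 : main case
    have hnQ : (n:ℤ) = u * (cfQ α k : ℤ) := by rw [hnuv, hvzero]; ring
    have hupos : (1:ℤ) ≤ u := by
      rcases le_or_gt u 0 with h | h
      · exfalso
        have : (1:ℤ) ≤ (n:ℤ) := by exact_mod_cast hn0
        nlinarith [(by exact_mod_cast hQ1 : (1:ℤ) ≤ (cfQ α k : ℤ))]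
      · omega
    have habs2 : |(u:ℝ) * bb α k - (v:ℝ) * bb α (k+1)| = (u:ℝ) * bb α k := by
      rw [hvzero]
      push_cast
      rw [abs_of_nonneg]
      · ring
      · have hu' : (1:ℝ) ≤ (u:ℝ) := by exact_mod_cast hupos
        nlinarith
    rw [habs, habs2] at hδlt2
    -- 2*n*(u*b) < 1 with n = u*Q  ⇒  2*u^2*Q*b < 1
    have hnRm : (n:ℝ) = (u:ℝ) * (cfQ α k : ℝ) := by exact_mod_cast congrArg (Int.cast : ℤ → ℝ) hnQ
    have hQb : 1 ≤ ((cfA α (k+1) : ℝ) + 2) * ((cfQ α k : ℝ) * bb α k) := by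
      have hkey := key5 α hα k
      have hup : (cfQ α (k+1) : ℝ) ≤ ((cfA α (k+1) : ℝ) + 1) * (cfQ α k : ℝ) := by
        exact_mod_cast cfQ_upper α hα k
      nlinarith [hbp, hbp', hbb', (by exact_mod_cast hQ1 : (1:ℝ) ≤ (cfQ α k : ℝ))]
    have hu2 : 2 * (u:ℝ)^2 * ((cfQ α k : ℝ) * bb α k) < 1 := by
      rw [hnRm] at hδlt2; nlinarith [hδlt2]
    have hufin : ((u:ℝ))^2 < ((cfA α (k+1) : ℝ) + 2) / 2 := by
      have hQbp : 0 < (cfQ α k : ℝ) * bb α k := by positivity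
      nlinarith [hu2, hQb, hQbp]
    refine ⟨u.toNat, ?_, ?_, ?_⟩
    · omega
    · have : (n:ℤ) = (u.toNat : ℤ) * (cfQ α k : ℤ) := by rw [hnQ]; congr 1; omega
      exact_mod_cast this
    · have : ((u.toNat : ℤ):ℝ) = (u:ℝ) := by congr 1; omega
      rw [show ((u.toNat : ℕ):ℝ) = ((u.toNat : ℤ):ℝ) by push_cast; ring, this]
      exact hufin
  · -- v ≥ 1 : contradiction
    exfalso
    have hvle : (1:ℤ) ≤ v := hvpos
    have huneg : u ≤ -1 := by
      by_contra h
      push_neg at h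
      have hu0 : 0 ≤ u := by omega
      have : (cfQ α (k+1) : ℤ) ≤ (n:ℤ) := by
        nlinarith [(by exact_mod_cast hQ1 : (1:ℤ) ≤ (cfQ α k : ℤ)),
          (by exact_mod_cast hQ'1 : (1:ℤ) ≤ (cfQ α (k+1) : ℤ))]
      have : cfQ α (k+1) ≤ n := by exact_mod_cast this
      omega
    have hQn : (cfQ α k : ℤ) ≤ (n:ℤ) := by exact_mod_cast hn1
    have h2 : (cfQ α k : ℤ) ≤ 2 * (n:ℤ) * v := by nlinarith
    have h1 : (cfQ α (k+1) : ℤ) ≤ 2 * (n:ℤ) * (-u) := by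
      rcases le_or_gt (cfQ α (k+1) : ℤ) (2 * (-u) * (cfQ α k : ℤ)) with h | h
      · nlinarith
      · -- 2*(-u)*Q < Q' : then 2n > Q'
        have h2n : (cfQ α (k+1) : ℤ) < 2 * (n:ℤ) := by nlinarith [hnuv]
        nlinarith
    have habs2 : |(u:ℝ) * bb α k - (v:ℝ) * bb α (k+1)| = ((-u:ℤ):ℝ) * bb α k + (v:ℝ) * bb α (k+1) := by
      rw [show (u:ℝ) * bb α k - (v:ℝ) * bb α (k+1) = -(((-u:ℤ):ℝ) * bb α k + (v:ℝ) * bb α (k+1)) by push_cast; ring, abs_neg, abs_of_nonneg]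
      have hu' : (1:ℝ) ≤ ((-u:ℤ):ℝ) := by exact_mod_cast (by omega : (1:ℤ) ≤ -u)
      have hv' : (1:ℝ) ≤ (v:ℝ) := by exact_mod_cast hvle
      push_cast at hu' ⊢
      nlinarith
    rw [habs, habs2] at hδlt2
    have h1R : ((cfQ α (k+1) : ℕ):ℝ) ≤ 2 * (n:ℝ) * (-(u:ℝ)) := by
      have h1' := (Int.cast_le (R := ℝ)).2 h1
      push_cast at h1' ⊢
      linarith
    have h2R : ((cfQ α k : ℕ):ℝ) ≤ 2 * (n:ℝ) * (v:ℝ) := by exact_mod_cast h2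
    have hkey := key5 α hα k
    push_cast at h1R h2R hδlt2
    have e1 : ((cfQ α (k+1) : ℕ):ℝ) * bb α k ≤ (2 * (n:ℝ) * (-(u:ℝ))) * bb α k :=
      mul_le_mul_of_nonneg_right h1R hbp.le
    have e2 : ((cfQ α k : ℕ):ℝ) * bb α (k+1) ≤ (2 * (n:ℝ) * (v:ℝ)) * bb α (k+1) :=
      mul_le_mul_of_nonneg_right h2R hbp'.le
    nlinarith [hδlt2, e1, e2, hkey]

theorem stmt7 :
    ∃ C : ℝ, 0 < C ∧ ∀ α : ℝ, Irrational α → ∀ k : ℕ,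
      ({n : ℕ | cfQ α k ≤ n ∧ n < cfQ α (k + 1) ∧
          nint (n * α) < 1 / (2 * n)}.ncard : ℝ)
        ≤ C * Real.sqrt (cfA α (k + 1)) := by
  refine ⟨2, by norm_num, ?_⟩
  intro α hα k
  have ha1 : 1 ≤ cfA α (k+1) := cfA_pos_s7 α hα k
  set U := ⌊Real.sqrt (((cfA α (k+1) : ℝ) + 2) / 2)⌋₊ with hU
  have hsub : {n : ℕ | cfQ α k ≤ n ∧ n < cfQ α (k + 1) ∧
      nint (n * α) < 1 / (2 * n)} ⊆ (fun u : ℕ => u * cfQ α k) '' (Set.Icc 1 U) := by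
    intro n hn
    obtain ⟨h1, h2, h3⟩ := hn
    obtain ⟨u, hu1, hu2, hu3⟩ := classify α hα k n h1 h2 h3
    refine ⟨u, ⟨hu1, ?_⟩, hu2.symm⟩
    rw [hU]
    refine Nat.le_floor ?_
    refine Real.le_sqrt_of_sq_le ?_
    exact le_of_lt hu3
  have hcard : {n : ℕ | cfQ α k ≤ n ∧ n < cfQ α (k + 1) ∧
      nint (n * α) < 1 / (2 * n)}.ncard ≤ U := by
    have hfin : ((fun u : ℕ => u * cfQ α k) '' (Set.Icc 1 U)).Finite :=
      (Set.finite_Icc 1 U).image _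
    calc {n : ℕ | cfQ α k ≤ n ∧ n < cfQ α (k + 1) ∧
        nint (n * α) < 1 / (2 * n)}.ncard
        ≤ ((fun u : ℕ => u * cfQ α k) '' (Set.Icc 1 U)).ncard :=
          Set.ncard_le_ncard hsub hfin
      _ ≤ (Set.Icc 1 U).ncard := Set.ncard_image_le (Set.finite_Icc 1 U)
      _ = (Finset.Icc 1 U).card := by rw [← Finset.coe_Icc, Set.ncard_coe_finset]
      _ = U + 1 - 1 := Nat.card_Icc 1 U
      _ = U := by omega
  have hUle : (U:ℝ) ≤ Real.sqrt (((cfA α (k+1) : ℝ) + 2) / 2) :=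
    Nat.floor_le (Real.sqrt_nonneg _)
  have hsqrt : Real.sqrt (((cfA α (k+1) : ℝ) + 2) / 2) ≤ 2 * Real.sqrt (cfA α (k+1)) := by
    have h4 : Real.sqrt (4 * (cfA α (k+1) : ℝ)) = 2 * Real.sqrt (cfA α (k+1)) := by
      rw [Real.sqrt_mul (by norm_num : (0:ℝ) ≤ 4),
        show Real.sqrt 4 = 2 by
          rw [show (4:ℝ) = 2^2 by norm_num]; exact Real.sqrt_sq (by norm_num)]
    rw [← h4]
    refine Real.sqrt_le_sqrt ?_
    have : (1:ℝ) ≤ (cfA α (k+1) : ℝ) := by exact_mod_cast ha1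
    linarith
  calc ({n : ℕ | cfQ α k ≤ n ∧ n < cfQ α (k + 1) ∧
      nint (n * α) < 1 / (2 * n)}.ncard : ℝ) ≤ (U:ℝ) := by exact_mod_cast hcard
    _ ≤ _ := le_trans hUle hsqrt
end
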